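/- The function φ : (−∞, log 2] → ℝ defined by φ(t) = f(h₂⁻¹(t)) for t ∈ [0, log 2], where f(y) = −(1−y) log(1−y), and φ(t) = 0 for t < 0, is convex on (−∞, log 2]. -/

import Mathlib

/-- The binary entropy function (natural logarithm). -/
noncomputable def binEnt (x : ℝ) : ℝ := -(x * Real.log x) - (1 - x) * Real.log (1 - x)

/-- The function `f(y) = -(1-y) log(1-y)`. -/
noncomputable def fFun (y : ℝ) : ℝ := -((1 - y) * Real.log (1 - y))

/-! With `x = h₂⁻¹ t`, the inverse function rule gives
`φ' t = f' x / h₂' x = (1 + log (1 - x)) / (log (1 - x) - log x)`.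
The derivative of this ratio in `x` is `(1 - h₂ x) / (x (1 - x) (log (1 - x) - log x)²)`,
which is nonnegative because `h₂ ≤ log 2 < 1`. As `h₂⁻¹` is increasing, `φ'` is increasing
on `(0, log 2)`, so `φ` is convex on `[0, log 2]`; since `φ 0 = 0` and `φ ≥ 0` there,
extending it by `0` to the left keeps it convex. -/

open Real Set

theorem IsCompact.continuousOn_image_of_leftInvOn {X Y : Type*} [TopologicalSpace X]
    [TopologicalSpace Y] [T2Space Y] {f : X → Y} {g : Y → X} {s : Set X} (hs : IsCompact s)
    (hf : ContinuousOn f s) (hg : LeftInvOn g f s) : ContinuousOn g (f '' s) := by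
  refine continuousOn_iff_isClosed.2 fun C hC => ⟨f '' (C ∩ s), ?_, ?_⟩
  · exact ((hs.inter_left hC).image_of_continuousOn (hf.mono inter_subset_right)).isClosed
  · rw [hg.image_inter', inter_assoc, inter_self]

theorem StrictMonoOn.strictMonoOn_image_of_leftInvOn {α β : Type*} [LinearOrder α] [Preorder β]
    {f : α → β} {g : β → α} {s : Set α} (hf : StrictMonoOn f s) (hg : LeftInvOn g f s) :
    StrictMonoOn g (f '' s) := by
  rintro _ ⟨x, hx, rfl⟩ _ ⟨y, hy, rfl⟩ hxy
  rw [hg hx, hg hy]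
  exact (hf.lt_iff_lt hx hy).1 hxy

theorem ConvexOn.extend_zero_Iio {g : ℝ → ℝ} {a b : ℝ} (hg : ConvexOn ℝ (Icc a b) g)
    (hga : g a = 0) (hnn : ∀ t ∈ Icc a b, 0 ≤ g t) :
    ConvexOn ℝ (Iic b) fun t => if t < a then 0 else g t := by
  set e : ℝ → ℝ := fun t => if t < a then 0 else g t
  have he_of_le : ∀ t ≤ a, e t = 0 := fun t ht => by
    rcases ht.lt_or_eq with ht | rfl
    · simp [e, ht]
    · simp [e, hga]
  have he_of_ge : ∀ t, a ≤ t → e t = g t := fun t ht => by simp [e, not_lt.2 ht]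
  refine convexOn_iff_slope_mono_adjacent.2 ⟨convex_Iic b, fun u v w _ hw huv hvw => ?_⟩
  rcases le_or_gt v a with hva | hav
  · rw [he_of_le v hva, he_of_le u (huv.le.trans hva), sub_self, zero_div, sub_zero]
    refine div_nonneg ?_ (sub_pos.2 hvw).le
    rcases le_or_gt w a with hwa | haw
    · rw [he_of_le w hwa]
    · rw [he_of_ge w haw.le]; exact hnn w ⟨haw.le, hw⟩
  have hwI : w ∈ Icc a b := ⟨hav.le.trans hvw.le, hw⟩
  rw [he_of_ge v hav.le, he_of_ge w hwI.1]
  rcases le_or_gt a u with hau | hua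
  · rw [he_of_ge u hau]
    exact hg.slope_mono_adjacent ⟨hau, (huv.trans hvw).le.trans hw⟩ hwI huv hvw
  -- the chord from `a` to `v` is steeper than the chord from `u < a` to `v`
  calc (g v - e u) / (v - u) = g v / (v - u) := by rw [he_of_le u hua.le, sub_zero]
    _ ≤ g v / (v - a) := div_le_div_of_nonneg_left (hnn v ⟨hav.le, hvw.le.trans hw⟩)
        (sub_pos.2 hav) (by linarith)
    _ = (g v - g a) / (v - a) := by rw [hga, sub_zero]
    _ ≤ (g w - g v) / (w - v) :=
        hg.slope_mono_adjacent ⟨le_rfl, hav.le.trans (hvw.le.trans hw)⟩ hwI hav hvw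

lemma binEnt_eq_binEntropy : binEnt = binEntropy := by
  funext x
  simp only [binEnt, binEntropy, log_inv]
  ring

lemma fFun_eq_negMulLog (y : ℝ) : fFun y = negMulLog (1 - y) := by
  simp only [fFun, negMulLog, neg_mul]

lemma continuous_fFun : Continuous fFun := by
  simp only [funext fFun_eq_negMulLog]
  fun_prop

lemma hasDerivAt_fFun {x : ℝ} (hx : x ≠ 1) : HasDerivAt fFun (1 + log (1 - x)) x := by
  rw [show fFun = fun y => negMulLog (1 - y) from funext fFun_eq_negMulLog]
  exact ((hasDerivAt_negMulLog (sub_ne_zero.2 hx.symm)).comp x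
    ((hasDerivAt_id' x).const_sub 1)).congr_deriv (by ring)

lemma fFun_nonneg {y : ℝ} (hy : y ∈ Icc (0 : ℝ) 1) : 0 ≤ fFun y := by
  rw [fFun_eq_negMulLog]
  exact negMulLog_nonneg (by linarith [hy.2]) (by linarith [hy.1])

lemma log_one_sub_sub_log_pos {x : ℝ} (hx : x ∈ Ioo (0 : ℝ) 2⁻¹) :
    0 < log (1 - x) - log x :=
  sub_pos.2 (log_lt_log hx.1 (by linarith [hx.2]))

lemma image_binEntropy_Icc : binEntropy '' Icc 0 2⁻¹ = Icc 0 (log 2) := by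
  rw [binEntropy_continuous.continuousOn.image_Icc_of_monotoneOn (by norm_num)
    binEntropy_strictMonoOn.monotoneOn, binEntropy_zero, binEntropy_two_inv]

/-- `fFun' x / binEntropy' x`, which by the inverse function rule is the derivative of
`fFun ∘ h₂⁻¹` at `binEntropy x`. -/
noncomputable def derivRatio (x : ℝ) : ℝ := (1 + log (1 - x)) / (log (1 - x) - log x)

lemma hasDerivAt_derivRatio {x : ℝ} (hx : x ∈ Ioo (0 : ℝ) 2⁻¹) :
    HasDerivAt derivRatio ((1 - binEntropy x) / (x * (1 - x) * (log (1 - x) - log x) ^ 2)) x := by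
  have hx0 : x ≠ 0 := hx.1.ne'
  have hx1 : 1 - x ≠ 0 := by linarith [hx.2]
  have hlog : HasDerivAt (fun y => log (1 - y)) ((1 - x)⁻¹ * -1) x :=
    (hasDerivAt_log hx1).comp x ((hasDerivAt_id' x).const_sub 1)
  refine ((hlog.const_add 1).div (hlog.sub (hasDerivAt_log hx0))
    (log_one_sub_sub_log_pos hx).ne').congr_deriv ?_
  simp only [binEntropy, log_inv, Pi.sub_apply]
  field_simp
  ring

lemma monotoneOn_derivRatio : MonotoneOn derivRatio (Ioo 0 2⁻¹) := by
  refine monotoneOn_of_hasDerivWithinAt_nonneg (convex_Ioo 0 2⁻¹)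
    (fun x hx => (hasDerivAt_derivRatio hx).continuousAt.continuousWithinAt)
    (fun x hx => (hasDerivAt_derivRatio (interior_subset hx)).hasDerivWithinAt) fun x hx => ?_
  rw [interior_Ioo] at hx
  have hH : binEntropy x < 1 := binEntropy_le_log_two.trans_lt (log_two_lt_d9.trans (by norm_num))
  have hx1 : 0 < 1 - x := by linarith [hx.2]
  exact div_nonneg (by linarith) (mul_nonneg (mul_nonneg hx.1.le hx1.le) (sq_nonneg _))

def IsBinEntropyInv (g : ℝ → ℝ) : Prop := LeftInvOn g binEntropy (Icc 0 2⁻¹)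

namespace IsBinEntropyInv

variable {g : ℝ → ℝ}

lemma binEntropy_apply (hg : IsBinEntropyInv g) {t : ℝ} (ht : t ∈ Icc 0 (log 2)) :
    binEntropy (g t) = t :=
  LeftInvOn.rightInvOn_image hg (image_binEntropy_Icc ▸ ht)

lemma mapsTo_Icc (hg : IsBinEntropyInv g) : MapsTo g (Icc 0 (log 2)) (Icc 0 2⁻¹) :=
  image_binEntropy_Icc ▸ LeftInvOn.mapsTo hg (surjOn_image _ _)

lemma continuousOn (hg : IsBinEntropyInv g) : ContinuousOn g (Icc 0 (log 2)) :=
  image_binEntropy_Icc ▸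
    isCompact_Icc.continuousOn_image_of_leftInvOn binEntropy_continuous.continuousOn hg

lemma monotoneOn (hg : IsBinEntropyInv g) : MonotoneOn g (Icc 0 (log 2)) :=
  image_binEntropy_Icc ▸ (binEntropy_strictMonoOn.strictMonoOn_image_of_leftInvOn hg).monotoneOn

lemma mapsTo_Ioo (hg : IsBinEntropyInv g) : MapsTo g (Ioo 0 (log 2)) (Ioo 0 2⁻¹) := by
  intro t ht
  have hgt := hg.mapsTo_Icc (Ioo_subset_Icc_self ht)
  have hH := hg.binEntropy_apply (Ioo_subset_Icc_self ht)
  refine ⟨hgt.1.lt_of_ne ?_, hgt.2.lt_of_ne ?_⟩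
  · intro h
    rw [← h, binEntropy_zero] at hH
    exact ht.1.ne hH
  · intro h
    rw [h, binEntropy_two_inv] at hH
    exact ht.2.ne' hH

lemma hasDerivAt (hg : IsBinEntropyInv g) {t : ℝ} (ht : t ∈ Ioo 0 (log 2)) :
    HasDerivAt g (log (1 - g t) - log (g t))⁻¹ t := by
  have hgt := hg.mapsTo_Ioo ht
  refine HasDerivAt.of_local_left_inverse
    (hg.continuousOn.continuousAt (Icc_mem_nhds ht.1 ht.2))
    (hasDerivAt_binEntropy hgt.1.ne' (by linarith [hgt.2])) (log_one_sub_sub_log_pos hgt).ne' ?_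
  filter_upwards [Ioo_mem_nhds ht.1 ht.2] with s hs
  exact hg.binEntropy_apply (Ioo_subset_Icc_self hs)

lemma hasDerivAt_fFun_comp (hg : IsBinEntropyInv g) {t : ℝ} (ht : t ∈ Ioo 0 (log 2)) :
    HasDerivAt (fun s => fFun (g s)) (derivRatio (g t)) t :=
  ((hasDerivAt_fFun (by linarith [(hg.mapsTo_Ioo ht).2])).comp t (hg.hasDerivAt ht)).congr_deriv
    (div_eq_mul_inv _ _).symm

lemma convexOn_fFun_comp (hg : IsBinEntropyInv g) :
    ConvexOn ℝ (Icc 0 (log 2)) fun t => fFun (g t) := by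
  refine MonotoneOn.convexOn_of_deriv (convex_Icc _ _)
    (continuous_fFun.comp_continuousOn hg.continuousOn) ?_ ?_ <;> rw [interior_Icc]
  · exact fun t ht => (hg.hasDerivAt_fFun_comp ht).differentiableAt.differentiableWithinAt
  · exact (monotoneOn_derivRatio.comp (hg.monotoneOn.mono Ioo_subset_Icc_self)
      hg.mapsTo_Ioo).congr fun t ht => (hg.hasDerivAt_fFun_comp ht).deriv.symm

lemma fFun_comp_nonneg (hg : IsBinEntropyInv g) {t : ℝ} (ht : t ∈ Icc 0 (log 2)) :
    0 ≤ fFun (g t) :=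
  fFun_nonneg ⟨(hg.mapsTo_Icc ht).1, (hg.mapsTo_Icc ht).2.trans (by norm_num)⟩

end IsBinEntropyInv

/-- For any function `h2inv` that inverts the binary entropy function restricted to
`[0, 1/2]` (i.e. `h₂⁻¹`), the function `φ` defined by `φ(t) = f(h₂⁻¹(t))` for
`t ∈ [0, log 2]` and `φ(t) = 0` for `t < 0` is convex on `(-∞, log 2]`. -/
theorem stmt_13 (h2inv : ℝ → ℝ)
    (hinv : ∀ x ∈ Set.Icc (0 : ℝ) (1 / 2), h2inv (binEnt x) = x) :
    ConvexOn ℝ (Set.Iic (Real.log 2))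
      (fun t => if t < 0 then 0 else fFun (h2inv t)) := by
  have hg : IsBinEntropyInv h2inv := by rwa [binEnt_eq_binEntropy, one_div] at hinv
  have h2inv_zero : h2inv 0 = 0 := by
    simpa using hg (left_mem_Icc.2 (by norm_num))
  refine hg.convexOn_fFun_comp.extend_zero_Iio ?_ fun t ht => hg.fFun_comp_nonneg ht
  simp [h2inv_zero, fFun]
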